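/- arXiv:2405.15050 — 6 statements merged into one kernel-verified Lean document; each statement's English description precedes it below -/
import Mathlib

section
/- Let Λ be a d×d real symmetric positive definite matrix with Λ ⪰ λI for some λ > 0, and let φ_1, ..., φ_n ∈ ℝ^d be such that Λ = λI + ∑_{i=1}^n φ_i φ_iᵀ. Then ∑_{i=1}^n φ_iᵀ Λ⁻¹ φ_i ≤ d. -/
open Matrix

lemma quad_eq_trace {d : ℕ} (A : Matrix (Fin d) (Fin d) ℝ) (u : Fin d → ℝ) :
    u ⬝ᵥ A.mulVec u = (A * vecMulVec u u).trace := by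
  simp [Matrix.trace, Matrix.mul_apply, vecMulVec_apply, dotProduct, mulVec,
    dotProduct, Finset.mul_sum, Matrix.diag]
  congr 1; ext i; congr 1; ext j; ring

/-- Elliptical potential fact (Lemma D.1 of Jin et al. 2020): for the regularized
Gram matrix `Λ = λ • I + ∑ φᵢ φᵢᵀ` with `λ > 0`, the sum of the self-normalized
quadratic forms is bounded by the dimension `d`. -/
theorem sum_quadform_inv_le_dim
    (d n : ℕ) (l : ℝ) (hl : 0 < l)
    (φ : Fin n → Fin d → ℝ)
    (Λ : Matrix (Fin d) (Fin d) ℝ)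
    (hΛsym : Λ.IsSymm) (hΛpd : Λ.PosDef)
    (hΛ : Λ = l • (1 : Matrix (Fin d) (Fin d) ℝ) + ∑ i, vecMulVec (φ i) (φ i)) :
    ∑ i, φ i ⬝ᵥ Λ⁻¹.mulVec (φ i) ≤ (d : ℝ) := by
  have hinv : (Λ⁻¹).PosDef := hΛpd.inv
  have hunit : IsUnit Λ.det := by
    simp [isUnit_iff_ne_zero, ne_of_gt hΛpd.det_pos]
  have hsum : ∑ i, φ i ⬝ᵥ Λ⁻¹.mulVec (φ i)
      = (Λ⁻¹ * (∑ i, vecMulVec (φ i) (φ i))).trace := by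
    rw [Finset.mul_sum, Matrix.trace_sum]
    exact Finset.sum_congr rfl fun i _ => quad_eq_trace _ _
  have hG : (∑ i, vecMulVec (φ i) (φ i)) = Λ - l • 1 := by
    rw [hΛ]; abel
  rw [hsum, hG, Matrix.mul_sub, Matrix.trace_sub, Matrix.nonsing_inv_mul Λ hunit]
  have htrpos : 0 ≤ (Λ⁻¹).trace := by
    apply Finset.sum_nonneg
    intro i _
    have := hinv.dotProduct_mulVec_pos (x := Pi.single i 1) (by simp [Pi.single_eq_same, Function.ne_iff])
    simpa [dotProduct, mulVec, Pi.single_apply] using le_of_lt this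
  have : (Λ⁻¹ * (l • 1)).trace = l * (Λ⁻¹).trace := by
    simp [Matrix.mul_smul, Matrix.trace_smul]
  rw [this, Matrix.trace_one]
  have : 0 ≤ l * (Λ⁻¹).trace := mul_nonneg (le_of_lt hl) htrpos
  simp only [Fintype.card_fin]
  linarith
end

section
/- Let φ_1, φ_2, ... be vectors in ℝ^d with ‖φ_t‖₂ ≤ 1 for all t. Define Λ_0 = I and Λ_t = I + ∑_{i=1}^t φ_i φ_iᵀ. Then ∑_{i=1}^t φ_iᵀ Λ_{i-1}⁻¹ φ_i ≤ 2 log det(Λ_t) ≤ 2d log(1 + t). -/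
open Matrix

lemma EP.vmv_psd {d : ℕ} (v : Fin d → ℝ) : (vecMulVec v v).PosSemidef := by
  have h : vecMulVec v v = replicateCol Unit v * (replicateCol Unit v)ᴴ := by
    ext i j
    simp [vecMulVec_apply, mul_apply, replicateCol]
  rw [h]
  exact posSemidef_self_mul_conjTranspose _

lemma EP.sum_psd {d : ℕ} (φ : ℕ → Fin d → ℝ) (s : Finset ℕ) :
    (∑ i ∈ s, vecMulVec (φ i) (φ i)).PosSemidef := by
  classical
  induction s using Finset.induction with
  | empty => simpa using Matrix.PosSemidef.zero
  | insert _ _ h ih => rw [Finset.sum_insert h]; exact (EP.vmv_psd _).add ih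

lemma EP.half_le_log {x : ℝ} (h0 : 0 ≤ x) (h1 : x ≤ 1) : x / 2 ≤ Real.log (1 + x) := by
  have h2 : (0:ℝ) < 1 - x/2 := by linarith
  have h3 : 1 - x/2 ≤ Real.exp (-(x/2)) := by linarith [Real.add_one_le_exp (-(x/2))]
  have he : Real.exp (x/2) * (1 - x/2) ≤ 1 := by
    have := mul_le_mul_of_nonneg_left h3 (Real.exp_pos (x/2)).le
    rwa [← Real.exp_add, add_neg_cancel, Real.exp_zero] at this
  have hx : Real.exp (x/2) ≤ 1 + x := by nlinarith [Real.exp_pos (x/2)]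
  calc x/2 = Real.log (Real.exp (x/2)) := (Real.log_exp _).symm
    _ ≤ Real.log (1+x) := Real.log_le_log (Real.exp_pos _) hx

lemma EP.det_step {d : ℕ} (B : Matrix (Fin d) (Fin d) ℝ) (hB : IsUnit B.det) (u : Fin d → ℝ) :
    (B + vecMulVec u u).det = B.det * (1 + u ⬝ᵥ B⁻¹ *ᵥ u) := by
  rw [vecMulVec_eq Unit, det_add_replicateCol_mul_replicateRow hB]
  congr 1
  rw [det_unique]
  simp [mul_apply, dotProduct, mulVec, Finset.mul_sum, mul_comm]
  rw [Finset.sum_comm]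
  exact Finset.sum_congr rfl fun i _ => Finset.sum_congr rfl fun j _ => by ring

lemma EP.det_one_add_le {d : ℕ} (A : Matrix (Fin d) (Fin d) ℝ) (hA : A.PosSemidef)
    {c : ℝ} (htr : A.trace ≤ c) : (1 + A).det ≤ (1 + c) ^ d := by
  have hAh := hA.isHermitian
  let U : Matrix (Fin d) (Fin d) ℝ := (hAh.eigenvectorUnitary : Matrix (Fin d) (Fin d) ℝ)
  have hsp := hAh.spectral_theorem
  have hUU : U * star U = 1 := (Matrix.mem_unitaryGroup_iff).mp hAh.eigenvectorUnitary.2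
  have hUU' : star U * U = 1 := (Matrix.mem_unitaryGroup_iff').mp hAh.eigenvectorUnitary.2
  have hD : diagonal (RCLike.ofReal ∘ hAh.eigenvalues) = diagonal hAh.eigenvalues := by
    congr 1
  have htrace : A.trace = ∑ i, hAh.eigenvalues i := by
    conv_lhs => rw [hsp]
    rw [hD, Unitary.conjStarAlgAut_apply, trace_mul_cycle, hUU', one_mul, trace_diagonal]
  have hsum : ∑ i, hAh.eigenvalues i ≤ c := htrace ▸ htr
  have hnn : ∀ i, 0 ≤ hAh.eigenvalues i := hA.eigenvalues_nonneg
  have hle : ∀ i, hAh.eigenvalues i ≤ c := fun i =>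
    le_trans (Finset.single_le_sum (fun j _ => hnn j) (Finset.mem_univ i)) hsum
  have h1 : (1 : Matrix (Fin d) (Fin d) ℝ) + A = U * (1 + diagonal hAh.eigenvalues) * star U := by
    rw [mul_add, add_mul, mul_one, hUU]
    conv_lhs => rw [hsp, hD, Unitary.conjStarAlgAut_apply]
  have hdet : (1 + A).det = ∏ i, (1 + hAh.eigenvalues i) := by
    rw [h1, det_mul, det_mul]
    have h2 : U.det * (star U).det = 1 := by rw [← det_mul, hUU, det_one]
    have h3 : (1 : Matrix (Fin d) (Fin d) ℝ) + diagonal hAh.eigenvalues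
        = diagonal (fun i => 1 + hAh.eigenvalues i) := by
      rw [← diagonal_one, diagonal_add]
    rw [h3, det_diagonal]
    calc U.det * (∏ i, (1 + hAh.eigenvalues i)) * (star U).det
        = (∏ i, (1 + hAh.eigenvalues i)) * (U.det * (star U).det) := by ring
      _ = ∏ i, (1 + hAh.eigenvalues i) := by rw [h2, mul_one]
  rw [hdet]
  calc ∏ i, (1 + hAh.eigenvalues i) ≤ ∏ _i : Fin d, (1 + c) :=
        Finset.prod_le_prod (fun i _ => by linarith [hnn i]) (fun i _ => by linarith [hle i])
    _ = (1 + c) ^ d := by simp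

lemma EP.inv_quad_le {d : ℕ} {A : Matrix (Fin d) (Fin d) ℝ} (hA : A.PosSemidef)
    (u : Fin d → ℝ) : u ⬝ᵥ (1 + A)⁻¹ *ᵥ u ≤ u ⬝ᵥ u := by
  have hB : (1 + A : Matrix (Fin d) (Fin d) ℝ).PosDef := Matrix.PosDef.one.add_posSemidef hA
  set B := (1 + A : Matrix (Fin d) (Fin d) ℝ) with hBdef
  set y := B⁻¹ *ᵥ u with hy
  have hBy : B *ᵥ y = u := by
    rw [hy, mulVec_mulVec, Matrix.mul_nonsing_inv _ hB.det_pos.ne'.isUnit, one_mulVec]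
  have hyu : y + A *ᵥ y = u := by
    rw [← hBy, hBdef, add_mulVec, one_mulVec]
  have h3 : 0 ≤ (A *ᵥ y) ⬝ᵥ y := by
    have := hA.dotProduct_mulVec_nonneg y
    rw [dotProduct_comm]
    simpa using this
  have h4 : 0 ≤ (A *ᵥ y) ⬝ᵥ (A *ᵥ y) :=
    Finset.sum_nonneg fun i _ => mul_self_nonneg _
  have h1 : u ⬝ᵥ y = y ⬝ᵥ y + (A *ᵥ y) ⬝ᵥ y := by
    rw [← hyu, add_dotProduct]
  have h2 : u ⬝ᵥ u = y ⬝ᵥ y + 2 * ((A *ᵥ y) ⬝ᵥ y) + (A *ᵥ y) ⬝ᵥ (A *ᵥ y) := by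
    rw [← hyu, add_dotProduct, dotProduct_add, dotProduct_add, dotProduct_comm y (A *ᵥ y)]
    ring
  rw [h1, h2]
  linarith

/-- Elliptical potential lemma (Lemma 11 in Abbasi-Yadkori et al. 2011). -/
theorem elliptical_potential
    (d : ℕ) (φ : ℕ → Fin d → ℝ)
    (hφ : ∀ t, Real.sqrt (∑ j, (φ t j) ^ 2) ≤ 1)
    (Λ : ℕ → Matrix (Fin d) (Fin d) ℝ)
    (hΛ : ∀ t, Λ t = 1 + ∑ i ∈ Finset.Icc 1 t, vecMulVec (φ i) (φ i))
    (t : ℕ) :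
    ∑ i ∈ Finset.Icc 1 t, φ i ⬝ᵥ (Λ (i - 1))⁻¹.mulVec (φ i)
        ≤ 2 * Real.log (Λ t).det ∧
      2 * Real.log (Λ t).det ≤ 2 * d * Real.log (1 + t) := by
  -- basic norm facts
  have hφ2 : ∀ i, φ i ⬝ᵥ φ i ≤ 1 := by
    intro i
    have h := hφ i
    have hnn : 0 ≤ ∑ j, (φ i j)^2 := by positivity
    have hle : ∑ j, (φ i j)^2 ≤ 1 := by
      nlinarith [Real.sq_sqrt hnn, Real.sqrt_nonneg (∑ j, (φ i j)^2)]
    simpa [dotProduct, pow_two] using hle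
  have hApsd : ∀ n, (∑ i ∈ Finset.Icc 1 n, vecMulVec (φ i) (φ i)).PosSemidef :=
    fun n => EP.sum_psd φ _
  have hpos : ∀ n, (Λ n).PosDef := by
    intro n
    rw [hΛ n]
    exact Matrix.PosDef.one.add_posSemidef (hApsd n)
  set f : ℕ → ℝ := fun n => Real.log (Λ n).det with hf
  set q : ℕ → ℝ := fun n => φ (n+1) ⬝ᵥ (Λ n)⁻¹ *ᵥ φ (n+1) with hqdef
  have hstep : ∀ n, Λ (n+1) = Λ n + vecMulVec (φ (n+1)) (φ (n+1)) := by
    intro n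
    rw [hΛ, hΛ, Finset.sum_Icc_succ_top (Nat.le_add_left 1 n), add_assoc]
  have hq0 : ∀ n, 0 ≤ q n := by
    intro n
    have h := ((hpos n).inv).posSemidef.dotProduct_mulVec_nonneg (φ (n+1))
    simpa [hqdef] using h
  have hq1 : ∀ n, q n ≤ 1 := by
    intro n
    have h := EP.inv_quad_le (hApsd n) (φ (n+1))
    rw [← hΛ n] at h
    exact le_trans h (hφ2 (n+1))
  have hdet : ∀ n, (Λ (n+1)).det = (Λ n).det * (1 + q n) := by
    intro n
    rw [hstep n]
    exact EP.det_step _ (hpos n).det_pos.ne'.isUnit _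
  have hlog : ∀ n, q n ≤ 2 * (f (n+1) - f n) := by
    intro n
    have h1q : (0:ℝ) < 1 + q n := by linarith [hq0 n]
    have hfs : f (n+1) = f n + Real.log (1 + q n) := by
      simp only [hf]
      rw [hdet n, Real.log_mul (hpos n).det_pos.ne' h1q.ne']
    rw [hfs]
    have := EP.half_le_log (hq0 n) (hq1 n)
    linarith
  have h0 : f 0 = 0 := by
    simp [hf, hΛ 0]
  constructor
  · -- lower part
    have key : ∑ i ∈ Finset.Icc 1 t, φ i ⬝ᵥ (Λ (i - 1))⁻¹.mulVec (φ i)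
        = ∑ n ∈ Finset.range t, q n := by
      rw [← Finset.Ico_add_one_right_eq_Icc, Finset.sum_Ico_eq_sum_range]
      simp only [Nat.succ_sub_one, Nat.add_sub_cancel]
      refine Finset.sum_congr rfl fun n _ => ?_
      simp only [hqdef]
      rw [show 1 + n = n + 1 by omega]
      simp
    rw [key]
    calc ∑ n ∈ Finset.range t, q n ≤ ∑ n ∈ Finset.range t, 2 * (f (n+1) - f n) :=
          Finset.sum_le_sum fun n _ => hlog n
      _ = 2 * (f t - f 0) := by rw [← Finset.mul_sum, Finset.sum_range_sub]
      _ = 2 * Real.log (Λ t).det := by rw [h0, hf]; ring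
  · -- upper part
    have htr : (∑ i ∈ Finset.Icc 1 t, vecMulVec (φ i) (φ i)).trace ≤ (t:ℝ) := by
      rw [trace_sum]
      calc ∑ i ∈ Finset.Icc 1 t, (vecMulVec (φ i) (φ i)).trace
          ≤ ∑ i ∈ Finset.Icc 1 t, 1 := by
            refine Finset.sum_le_sum fun i _ => ?_
            have := hφ2 i
            simpa [Matrix.trace, Matrix.diag, vecMulVec_apply, dotProduct] using this
        _ = (t:ℝ) := by simp
    have hdle : (Λ t).det ≤ (1 + (t:ℝ)) ^ d := by
      rw [hΛ t]
      exact EP.det_one_add_le _ (hApsd t) htr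
    have hlog2 : Real.log (Λ t).det ≤ d * Real.log (1 + t) := by
      calc Real.log (Λ t).det ≤ Real.log ((1 + (t:ℝ)) ^ d) :=
            Real.log_le_log (hpos t).det_pos hdle
        _ = d * Real.log (1 + t) := by rw [Real.log_pow]
    linarith
end

section
/- Let A and B be d×d real symmetric positive definite matrices with A ⪰ B. Then for any x ∈ ℝ^d, √(xᵀAx) ≤ √(xᵀBx) · √(det(A)/det(B)). -/
open Matrix Finset

private lemma quad_conj {d : ℕ} (M N : Matrix (Fin d) (Fin d) ℝ) (x : Fin d → ℝ) :
    x ⬝ᵥ (Mᵀ * N * M) *ᵥ x = (M *ᵥ x) ⬝ᵥ N *ᵥ (M *ᵥ x) := by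
  rw [← mulVec_mulVec, ← mulVec_mulVec, dotProduct_mulVec, vecMul_transpose,
    dotProduct_mulVec]

/-- Key spectral bound: if `C ⪰ 1` is symmetric, then `xᵀCx ≤ det C * xᵀx`. -/
private lemma quad_le_det_mul {d : ℕ} (C : Matrix (Fin d) (Fin d) ℝ)
    (hC : C.IsHermitian) (h1 : (C - 1).PosSemidef) (x : Fin d → ℝ) :
    x ⬝ᵥ C.mulVec x ≤ C.det * (x ⬝ᵥ x) := by
  -- eigenvalues are ≥ 1
  have heig : ∀ i, 1 ≤ hC.eigenvalues i := by
    intro i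
    have hv := hC.mulVec_eigenvectorBasis i
    set v : Fin d → ℝ := ⇑(hC.eigenvectorBasis i) with hvdef
    have hvv : v ⬝ᵥ v = 1 := by
      have hnorm := (hC.eigenvectorBasis).orthonormal.1 i
      have := real_inner_self_eq_norm_sq (hC.eigenvectorBasis i)
      rw [hnorm] at this
      rw [EuclideanSpace.inner_eq_star_dotProduct] at this
      simpa [dotProduct_comm] using this
    have hps := h1.dotProduct_mulVec_nonneg v
    have : (C - 1) *ᵥ v = (hC.eigenvalues i - 1) • v := by
      rw [sub_mulVec, hv, one_mulVec, sub_smul, one_smul]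
    rw [this, star_trivial, dotProduct_smul, hvv, smul_eq_mul, mul_one] at hps
    linarith
  -- spectral decomposition
  set U : Matrix (Fin d) (Fin d) ℝ := (hC.eigenvectorUnitary : Matrix (Fin d) (Fin d) ℝ) with hU
  set μ : Fin d → ℝ := hC.eigenvalues with hμ
  have hUT : star U = Uᵀ := by
    ext i j
    simp [Matrix.star_eq_conjTranspose, Matrix.conjTranspose_apply]
  have hspec : C = (Uᵀ)ᵀ * diagonal μ * Uᵀ := by
    have := hC.spectral_theorem
    simp [Function.comp] at this
    rw [transpose_transpose, ← hUT]
    exact this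
  have hone : (1 : Matrix (Fin d) (Fin d) ℝ) = (Uᵀ)ᵀ * 1 * Uᵀ := by
    rw [transpose_transpose, mul_one, ← hUT]
    exact (Unitary.coe_mul_star_self hC.eigenvectorUnitary).symm
  set z : Fin d → ℝ := Uᵀ *ᵥ x with hz
  have hCx : x ⬝ᵥ C.mulVec x = ∑ i, μ i * z i ^ 2 := by
    rw [hspec, quad_conj]
    simp only [dotProduct, mulVec_diagonal]
    exact Finset.sum_congr rfl fun i _ => by rw [hz]; ring
  have hxx : x ⬝ᵥ x = ∑ i, z i ^ 2 := by
    have h := quad_conj Uᵀ (1 : Matrix (Fin d) (Fin d) ℝ) x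
    rw [← hone, one_mulVec, one_mulVec] at h
    rw [h]
    simp [dotProduct, sq, hz]
  have hdet : C.det = ∏ i, μ i := by
    simpa using hC.det_eq_prod_eigenvalues
  rw [hCx, hxx, hdet, Finset.mul_sum]
  refine Finset.sum_le_sum fun i _ => ?_
  have hle : μ i ≤ ∏ j, μ j := by
    rw [← Finset.mul_prod_erase Finset.univ μ (Finset.mem_univ i)]
    have h1 : (1:ℝ) ≤ ∏ j ∈ Finset.univ.erase i, μ j := by
      calc (1:ℝ) = ∏ _j ∈ Finset.univ.erase i, (1:ℝ) := by simp
      _ ≤ ∏ j ∈ Finset.univ.erase i, μ j :=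
        Finset.prod_le_prod (by simp) (fun j _ => heig j)
    exact le_mul_of_one_le_right (by linarith [heig i]) h1
  exact mul_le_mul_of_nonneg_right hle (sq_nonneg _)

/-- Lemma 12 in Abbasi-Yadkori et al. 2011: if `A ⪰ B ≻ 0` then
`‖x‖_A ≤ ‖x‖_B √(det A / det B)`. -/
theorem norm_le_norm_mul_sqrt_det_ratio
    (d : ℕ) (A B : Matrix (Fin d) (Fin d) ℝ)
    (hAsym : A.IsSymm) (hBsym : B.IsSymm)
    (hApd : A.PosDef) (hBpd : B.PosDef)
    (hAB : (A - B).PosSemidef)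
    (x : Fin d → ℝ) :
    Real.sqrt (x ⬝ᵥ A.mulVec x)
      ≤ Real.sqrt (x ⬝ᵥ B.mulVec x) * Real.sqrt (A.det / B.det) := by
  have hBps := hBpd.posSemidef
  set S : Matrix (Fin d) (Fin d) ℝ := (open scoped MatrixOrder in CFC.sqrt B) with hSdef
  have hSps : S.PosSemidef := by
    open scoped MatrixOrder in exact (CFC.sqrt_nonneg B).posSemidef
  have hSS : S * S = B := by
    open scoped MatrixOrder in exact CFC.sqrt_mul_sqrt_self B hBps.nonneg
  have herm_T : ∀ (M : Matrix (Fin d) (Fin d) ℝ), M.IsHermitian → Mᵀ = M := by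
    intro M hM
    have h := hM.eq
    ext i j
    have := congrFun (congrFun h i) j
    simpa [Matrix.conjTranspose_apply] using this
  have hSsym : Sᵀ = S := herm_T S hSps.1
  have hdetS : S.det * S.det = B.det := by rw [← det_mul, hSS]
  have hdetS_ne : S.det ≠ 0 := by
    intro h
    rw [h, mul_zero] at hdetS
    exact (hBpd.det_pos.ne' hdetS.symm)
  have hSunit : IsUnit S.det := isUnit_iff_ne_zero.mpr hdetS_ne
  have hSinv : S * S⁻¹ = 1 := mul_nonsing_inv S hSunit
  have hinvS : S⁻¹ * S = 1 := nonsing_inv_mul S hSunit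
  have hSisym : (S⁻¹)ᵀ = S⁻¹ := herm_T _ hSps.1.inv
  have hSih : (S⁻¹)ᴴ = S⁻¹ := hSps.1.inv.eq
  set C : Matrix (Fin d) (Fin d) ℝ := S⁻¹ * A * S⁻¹ with hCdef
  have hCherm : C.IsHermitian := by
    have := isHermitian_conjTranspose_mul_mul S⁻¹ hApd.1
    rwa [hSih] at this
  have hC1 : (C - 1).PosSemidef := by
    have h := hAB.conjTranspose_mul_mul_same S⁻¹
    have heq : (S⁻¹)ᴴ * (A - B) * S⁻¹ = C - 1 := by
      rw [hSih, Matrix.mul_sub, Matrix.sub_mul, hCdef]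
      congr 1
      rw [← hSS, ← Matrix.mul_assoc, Matrix.mul_assoc (S⁻¹ * S), hSinv,
        Matrix.mul_one, hinvS]
    rwa [heq] at h
  have hA_eq : A = Sᵀ * C * S := by
    rw [hSsym, hCdef, ← Matrix.mul_assoc, ← Matrix.mul_assoc,
      Matrix.mul_assoc (S * S⁻¹ * A), hinvS, Matrix.mul_one,
      hSinv, Matrix.one_mul]
  have hB_eq : B = Sᵀ * 1 * S := by rw [hSsym, Matrix.mul_one, hSS]
  have hqA : x ⬝ᵥ A.mulVec x = (S *ᵥ x) ⬝ᵥ C.mulVec (S *ᵥ x) := by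
    conv_lhs => rw [hA_eq]
    exact quad_conj S C x
  have hqB : x ⬝ᵥ B.mulVec x = (S *ᵥ x) ⬝ᵥ (S *ᵥ x) := by
    conv_lhs => rw [hB_eq]
    rw [quad_conj, one_mulVec]
  have hdetC : C.det = A.det / B.det := by
    rw [hCdef, det_mul, det_mul, det_nonsing_inv]
    rw [← hdetS, Ring.inverse_eq_inv']
    field_simp
  have hkey := quad_le_det_mul C hCherm hC1 (S *ᵥ x)
  rw [← hqA, ← hqB, hdetC] at hkey
  have hratio : 0 ≤ A.det / B.det := le_of_lt (div_pos hApd.det_pos hBpd.det_pos)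
  calc Real.sqrt (x ⬝ᵥ A.mulVec x) ≤ Real.sqrt (A.det / B.det * (x ⬝ᵥ B.mulVec x)) :=
        Real.sqrt_le_sqrt hkey
    _ = Real.sqrt (x ⬝ᵥ B.mulVec x) * Real.sqrt (A.det / B.det) := by
        rw [Real.sqrt_mul hratio, mul_comm]
end

section
/- Let w = Λ⁻¹ ∑_{i=1}^n x_i y_i be the ridge regression coefficient, where Λ = λI + ∑_{i=1}^n x_i x_iᵀ with λ > 0, x_i ∈ ℝ^d, and y_i ∈ [0, B]. Then ‖w‖₂ ≤ B √(dn/λ). -/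
open Matrix

set_option maxHeartbeats 1000000 in
/-- Norm bound on ridge regression coefficients: if `w = Λ⁻¹ ∑ xᵢ yᵢ` with
`Λ = λI + ∑ xᵢxᵢᵀ`, `λ > 0` and `yᵢ ∈ [0, B]`, then `‖w‖₂ ≤ B √(dn/λ)`. -/
theorem ridge_coeff_norm_le
    (d n : ℕ) (l B : ℝ) (hl : 0 < l)
    (x : Fin n → Fin d → ℝ) (y : Fin n → ℝ)
    (hy : ∀ i, y i ∈ Set.Icc 0 B)
    (Λ : Matrix (Fin d) (Fin d) ℝ)
    (hΛ : Λ = l • (1 : Matrix (Fin d) (Fin d) ℝ) + ∑ i, vecMulVec (x i) (x i))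
    (w : Fin d → ℝ)
    (hw : w = Λ⁻¹.mulVec (∑ i, y i • x i)) :
    Real.sqrt (∑ j, (w j) ^ 2) ≤ B * Real.sqrt (d * n / l) := by
  -- trivial case n = 0
  rcases Nat.eq_zero_or_pos n with hn | hn
  · subst hn
    simp only [Finset.univ_eq_empty, Finset.sum_empty, mulVec_zero] at hw
    subst hw
    simp [Nat.cast_zero, mul_zero, zero_div, Real.sqrt_zero]
  have hB : 0 ≤ B := le_trans (hy ⟨0, hn⟩).1 (hy ⟨0, hn⟩).2
  -- the quadratic form of Λ
  have hmv : ∀ v : Fin d → ℝ,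
      Λ.mulVec v = fun j => l * v j + ∑ i, (∑ k, x i k * v k) * x i j := by
    intro v
    funext j
    simp only [hΛ, mulVec, dotProduct, Matrix.add_apply, Matrix.smul_apply,
      Matrix.one_apply, Matrix.sum_apply, vecMulVec_apply, smul_eq_mul,
      add_mul, Finset.sum_add_distrib, Finset.sum_mul]
    congr 1
    · simp [Finset.mul_sum, mul_ite, mul_comm]
    · rw [Finset.sum_comm]
      refine Finset.sum_congr rfl fun i _ => ?_
      exact Finset.sum_congr rfl fun k _ => by ring
  have hquad : ∀ v : Fin d → ℝ,
      v ⬝ᵥ Λ.mulVec v = l * (∑ j, v j ^ 2) + ∑ i, (∑ k, x i k * v k) ^ 2 := by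
    intro v
    rw [hmv v]
    simp only [dotProduct]
    have step : ∀ j, v j * (l * v j + ∑ i, (∑ k, x i k * v k) * x i j)
        = l * v j ^ 2 + ∑ i, (∑ k, x i k * v k) * (x i j * v j) := by
      intro j
      rw [mul_add, Finset.mul_sum]
      congr 1
      · ring
      · exact Finset.sum_congr rfl fun i _ => by ring
    calc ∑ j, v j * (l * v j + ∑ i, (∑ k, x i k * v k) * x i j)
        = ∑ j, (l * v j ^ 2 + ∑ i, (∑ k, x i k * v k) * (x i j * v j)) :=
          Finset.sum_congr rfl fun j _ => step j
      _ = (∑ j, l * v j ^ 2) + ∑ j, ∑ i, (∑ k, x i k * v k) * (x i j * v j) :=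
          Finset.sum_add_distrib
      _ = l * (∑ j, v j ^ 2) + ∑ i, (∑ k, x i k * v k) ^ 2 := by
          congr 1
          · rw [Finset.mul_sum]
          · rw [Finset.sum_comm]
            refine Finset.sum_congr rfl fun i _ => ?_
            rw [← Finset.mul_sum, sq]
  -- Λ is positive definite, hence invertible
  have hPD : Λ.PosDef := by
    rw [posDef_iff_dotProduct_mulVec]
    constructor
    · rw [hΛ]
      unfold Matrix.IsHermitian
      rw [conjTranspose_add, conjTranspose_smul, conjTranspose_one]
      congr 1
      rw [conjTranspose_sum]
      congr 1; funext i
      ext j k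
      simp [vecMulVec_apply, mul_comm]
    · intro v hv
      simp only [star_trivial, RCLike.re_to_real]
      rw [hquad v]
      have h1 : 0 < ∑ j, v j ^ 2 := by
        obtain ⟨j, hj⟩ := Function.ne_iff.mp hv
        have hj' : v j ≠ 0 := by simpa using hj
        have hpos : 0 < v j ^ 2 :=
          lt_of_le_of_ne (sq_nonneg _) (Ne.symm (pow_ne_zero 2 hj'))
        exact lt_of_lt_of_le hpos
          (Finset.single_le_sum (fun k _ => sq_nonneg (v k)) (Finset.mem_univ j))
      have h2 : 0 ≤ ∑ i, (∑ k, x i k * v k) ^ 2 :=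
        Finset.sum_nonneg fun i _ => sq_nonneg _
      nlinarith
  have hdet : IsUnit Λ.det := isUnit_iff_ne_zero.mpr (ne_of_gt hPD.det_pos)
  -- Λ w = ∑ yᵢ xᵢ
  have hΛw : Λ.mulVec w = ∑ i, y i • x i := by
    rw [hw, mulVec_mulVec, Matrix.mul_nonsing_inv _ hdet, one_mulVec]
  -- abbreviations
  set N := ∑ j, w j ^ 2 with hN
  set a : Fin n → ℝ := fun i => ∑ k, x i k * w k with ha
  set P := ∑ i, a i ^ 2 with hP
  have hNnn : 0 ≤ N := Finset.sum_nonneg fun j _ => sq_nonneg _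
  have hPnn : 0 ≤ P := Finset.sum_nonneg fun i _ => sq_nonneg _
  -- key identity
  have hkey : l * N + P = ∑ i, y i * a i := by
    rw [← hquad w, hΛw]
    simp only [dotProduct, Finset.sum_apply, Pi.smul_apply, smul_eq_mul,
      Finset.mul_sum]
    rw [Finset.sum_comm]
    refine Finset.sum_congr rfl fun i _ => ?_
    rw [ha, Finset.mul_sum]
    exact Finset.sum_congr rfl fun j _ => by ring
  -- bound the RHS via Cauchy–Schwarz
  have hbound : ∑ i, y i * a i ≤ B * Real.sqrt (n * P) := by
    have h1 : ∑ i, y i * a i ≤ ∑ i, B * |a i| := by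
      apply Finset.sum_le_sum
      intro i _
      rcases le_or_gt 0 (a i) with h | h
      · rw [abs_of_nonneg h]
        exact mul_le_mul_of_nonneg_right (hy i).2 h
      · calc y i * a i ≤ 0 := mul_nonpos_of_nonneg_of_nonpos (hy i).1 h.le
          _ ≤ B * |a i| := mul_nonneg hB (abs_nonneg _)
    have h2 : ∑ i, |a i| ≤ Real.sqrt (n * P) := by
      have hcs := sq_sum_le_card_mul_sum_sq (s := Finset.univ)
        (f := fun i : Fin n => |a i|)
      simp only [Finset.card_univ, Fintype.card_fin, sq_abs] at hcs
      have hnp : (∑ i, |a i|) ^ 2 ≤ n * P := by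
        rw [hP]; exact_mod_cast hcs
      have hsum_nn : 0 ≤ ∑ i, |a i| := Finset.sum_nonneg fun i _ => abs_nonneg _
      nlinarith [Real.sq_sqrt (show (0:ℝ) ≤ n * P by positivity),
        Real.sqrt_nonneg (n * P)]
    calc ∑ i, y i * a i ≤ ∑ i, B * |a i| := h1
      _ = B * ∑ i, |a i| := by rw [Finset.mul_sum]
      _ ≤ B * Real.sqrt (n * P) := mul_le_mul_of_nonneg_left h2 hB
  -- let Q := l*N + P; then Q ≤ B √(n Q), hence Q ≤ B² n
  set Q := l * N + P with hQ
  have hQnn : 0 ≤ Q := by positivity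
  have hPQ : P ≤ Q := by nlinarith
  have hQle : Q ≤ B * Real.sqrt (n * Q) := by
    calc Q = ∑ i, y i * a i := hkey
      _ ≤ B * Real.sqrt (n * P) := hbound
      _ ≤ B * Real.sqrt (n * Q) := by
        apply mul_le_mul_of_nonneg_left _ hB
        apply Real.sqrt_le_sqrt
        have hn' : (0:ℝ) ≤ n := Nat.cast_nonneg n
        nlinarith
  have hlN : l * N ≤ B ^ 2 * n := by
    have hsq : Q ^ 2 ≤ B ^ 2 * (n * Q) := by
      have := Real.sq_sqrt (show (0:ℝ) ≤ n * Q by positivity)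
      nlinarith [Real.sqrt_nonneg (n * Q)]
    rcases eq_or_lt_of_le hQnn with hQ0 | hQ0
    · have h3 : l * N ≤ 0 := by nlinarith
      have h4 : 0 ≤ l * N := by positivity
      nlinarith [sq_nonneg B, Nat.cast_nonneg (α := ℝ) n]
    · nlinarith
  -- conclude
  have hNle : N ≤ B ^ 2 * (d * n / l) := by
    rcases Nat.eq_zero_or_pos d with hd0 | hd0
    · have hN0 : N = 0 := by
        subst hd0
        rw [hN]
        simp
      rw [hN0]
      positivity
    · have hd : (1:ℝ) ≤ d := by exact_mod_cast hd0
      have hn' : (0:ℝ) ≤ n := Nat.cast_nonneg n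
      have h1 : N ≤ B ^ 2 * n / l := by
        rw [le_div_iff₀ hl]
        nlinarith
      have h2 : (n:ℝ) / l ≤ (d:ℝ) * n / l := by
        rw [div_le_div_iff₀ hl hl]
        nlinarith [mul_nonneg (sub_nonneg.mpr hd) (mul_nonneg hn' hl.le)]
      calc N ≤ B ^ 2 * n / l := h1
        _ = B ^ 2 * ((n:ℝ) / l) := by ring
        _ ≤ B ^ 2 * ((d:ℝ) * n / l) :=
            mul_le_mul_of_nonneg_left h2 (sq_nonneg B)
  calc Real.sqrt N ≤ Real.sqrt (B ^ 2 * ((d:ℝ) * n / l)) := Real.sqrt_le_sqrt hNle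
    _ = B * Real.sqrt ((d:ℝ) * n / l) := by
      rw [Real.sqrt_mul (sq_nonneg B), Real.sqrt_sq hB]
end

section
/- Consider a finite MDP (S, A, P, r) with r ∈ [0,1] and discount factor γ ∈ [0,1). Suppose there exist J* ∈ ℝ and v* : S → ℝ satisfying the average-reward Bellman optimality equation: J* + v*(s) = max_a (r(s,a) + ∑_{s'} P(s'|s,a) v*(s')) for all s. Let V* be the optimal value function of the γ-discounted MDP. Then for all s ∈ S, |(1−γ)V*(s) − J*| ≤ (1−γ)·sp(v*), where sp(v*) = max v* − min v*. -/
/-!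
Both `V*` and `v*` are governed by the Bellman operator `T_γ f s = max_a (r s a + γ (P f)(s, a))`
(the average-reward equation reads `T_1 v* = J* + v*`). `T_γ` is monotone and shifts constants
by `γ c`, so for `γ < 1` every sub-solution `u ≤ T_γ u` lies below every super-solution
`T_γ w ≤ w`. Since `m ≤ P v* ≤ M`, where `m = min v*` and `M = max v*`, replacing `T_1` by `T_γ`
changes `T v*` by between `-(1 - γ) M` and `-(1 - γ) m`. Hence `v* + J*/(1 - γ) - m` is a
super-solution and `v* + J*/(1 - γ) - M` a sub-solution, which pins `V* - J*/(1 - γ)` between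
`v* - M` and `v* - m`.
-/

open Finset

theorem le_of_le_apply_of_apply_le {S : Type*} [Finite S] {T : (S → ℝ) → S → ℝ}
    (hT : Monotone T) {γ : ℝ} (hγ : γ < 1)
    (hT_add : ∀ f (c : ℝ), T (f + fun _ => c) = T f + fun _ => γ * c)
    {u w : S → ℝ} (hu : u ≤ T u) (hw : T w ≤ w) : u ≤ w := by
  by_contra hlt
  obtain ⟨s₁, hs₁⟩ : ∃ s, w s < u s := by simpa [Pi.le_def] using hlt
  have : Nonempty S := ⟨s₁⟩
  obtain ⟨s₀, hs₀⟩ : ∃ s₀, ∀ s, u s - w s ≤ u s₀ - w s₀ := Finite.exists_max _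
  set D := u s₀ - w s₀
  have hD : 0 < D := by linarith [hs₀ s₁]
  have hu_le : u ≤ w + fun _ => D := fun s => by
    simp only [Pi.add_apply]
    linarith [hs₀ s]
  have hstep : u s₀ ≤ w s₀ + γ * D := by
    have h := (hu.trans (hT hu_le)) s₀
    rw [hT_add] at h
    exact h.trans (add_le_add_left (hw s₀) _)
  nlinarith

theorem sum_mul_le_of_le {S : Type*} [Fintype S] {p v : S → ℝ} {M : ℝ} (hp0 : ∀ s, 0 ≤ p s)
    (hp1 : ∑ s, p s = 1) (hv : ∀ s, v s ≤ M) : ∑ s, p s * v s ≤ M :=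
  calc ∑ s, p s * v s ≤ ∑ s, p s * M :=
        sum_le_sum fun s _ => mul_le_mul_of_nonneg_left (hv s) (hp0 s)
    _ = M := by rw [← sum_mul, hp1, one_mul]

theorem le_sum_mul_of_le {S : Type*} [Fintype S] {p v : S → ℝ} {m : ℝ} (hp0 : ∀ s, 0 ≤ p s)
    (hp1 : ∑ s, p s = 1) (hv : ∀ s, m ≤ v s) : m ≤ ∑ s, p s * v s :=
  calc m = ∑ s, p s * m := by rw [← sum_mul, hp1, one_mul]
    _ ≤ ∑ s, p s * v s := sum_le_sum fun s _ => mul_le_mul_of_nonneg_left (hv s) (hp0 s)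

section Bellman

variable {S A : Type*} [Fintype S] [Fintype A] [Nonempty A]

noncomputable def bellmanOp (P : S → A → S → ℝ) (r : S → A → ℝ) (γ : ℝ) (f : S → ℝ) (s : S) :
    ℝ :=
  univ.sup' univ_nonempty fun a => r s a + γ * ∑ s', P s a s' * f s'

variable {P : S → A → S → ℝ} {r : S → A → ℝ} {γ : ℝ}

theorem bellmanOp_mono (hP0 : ∀ s a s', 0 ≤ P s a s') (hγ : 0 ≤ γ) :
    Monotone (bellmanOp P r γ) := fun _ _ hfg s =>
  sup'_mono_fun fun a _ => add_le_add_right (mul_le_mul_of_nonneg_left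
    (sum_le_sum fun s' _ => mul_le_mul_of_nonneg_left (hfg s') (hP0 s a s')) hγ) _

theorem bellmanOp_add_const (hP1 : ∀ s a, ∑ s', P s a s' = 1) (f : S → ℝ) (c : ℝ) :
    bellmanOp P r γ (f + fun _ => c) = bellmanOp P r γ f + fun _ => γ * c := by
  funext s
  simp only [bellmanOp, Pi.add_apply, sup'_add, mul_add, sum_add_distrib, ← sum_mul, hP1,
    one_mul, add_assoc]

theorem bellmanOp_le_bellmanOp_one_sub (hP0 : ∀ s a s', 0 ≤ P s a s')
    (hP1 : ∀ s a, ∑ s', P s a s' = 1) (hγ : γ ≤ 1) {v : S → ℝ} {m : ℝ} (hv : ∀ s, m ≤ v s)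
    (s : S) : bellmanOp P r γ v s ≤ bellmanOp P r 1 v s - (1 - γ) * m := by
  refine sup'_le _ _ fun a _ => ?_
  have hm := mul_le_mul_of_nonneg_left (le_sum_mul_of_le (hP0 s a) (hP1 s a) hv)
    (sub_nonneg.2 hγ)
  have := le_sup' (fun a => r s a + 1 * ∑ s', P s a s' * v s') (mem_univ a)
  rw [bellmanOp]
  linarith

theorem bellmanOp_one_sub_le_bellmanOp (hP0 : ∀ s a s', 0 ≤ P s a s')
    (hP1 : ∀ s a, ∑ s', P s a s' = 1) (hγ : γ ≤ 1) {v : S → ℝ} {M : ℝ} (hv : ∀ s, v s ≤ M)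
    (s : S) : bellmanOp P r 1 v s - (1 - γ) * M ≤ bellmanOp P r γ v s := by
  rw [sub_le_iff_le_add]
  refine sup'_le _ _ fun a _ => ?_
  have hM := mul_le_mul_of_nonneg_left (sum_mul_le_of_le (hP0 s a) (hP1 s a) hv)
    (sub_nonneg.2 hγ)
  have := le_sup' (fun a => r s a + γ * ∑ s', P s a s' * v s') (mem_univ a)
  rw [bellmanOp]
  linarith

end Bellman

theorem discounted_approximates_average_reward_general
    {S A : Type*} [Fintype S] [Fintype A] [Nonempty S] [Nonempty A]
    (P : S → A → S → ℝ)
    (hP : ∀ s a, (∀ s', 0 ≤ P s a s') ∧ ∑ s', P s a s' = 1)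
    (r : S → A → ℝ)
    (γ : ℝ) (hγ : γ ∈ Set.Ico (0 : ℝ) 1)
    (Jstar : ℝ) (vstar : S → ℝ)
    (hBell : ∀ s, Jstar + vstar s =
      Finset.univ.sup' Finset.univ_nonempty
        (fun a => r s a + ∑ s', P s a s' * vstar s'))
    (Vstar : S → ℝ)
    (hVstar : ∀ s, Vstar s =
      Finset.univ.sup' Finset.univ_nonempty
        (fun a => r s a + γ * ∑ s', P s a s' * Vstar s')) :
    ∀ s, |(1 - γ) * Vstar s - Jstar|
      ≤ (1 - γ) * (Finset.univ.sup' Finset.univ_nonempty vstar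
          - Finset.univ.inf' Finset.univ_nonempty vstar) := by
  obtain ⟨hγ0, hγ1⟩ := hγ
  have hP0 s a := (hP s a).1
  have hP1 s a := (hP s a).2
  set m := univ.inf' univ_nonempty vstar
  set M := univ.sup' univ_nonempty vstar
  have hm s : m ≤ vstar s := inf'_le _ (mem_univ s)
  have hM s : vstar s ≤ M := le_sup' _ (mem_univ s)
  have hT_one s : bellmanOp P r 1 vstar s = Jstar + vstar s := by simp [bellmanOp, hBell]
  obtain ⟨c, hJ⟩ : ∃ c, Jstar = (1 - γ) * c :=
    ⟨Jstar / (1 - γ), (mul_div_cancel₀ _ (sub_pos.2 hγ1).ne').symm⟩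
  have comparison : ∀ {u w : S → ℝ}, u ≤ bellmanOp P r γ u → bellmanOp P r γ w ≤ w → u ≤ w :=
    le_of_le_apply_of_apply_le (bellmanOp_mono hP0 hγ0) hγ1 (bellmanOp_add_const hP1)
  have upper : Vstar ≤ vstar + fun _ => c - m := by
    refine comparison (fun s => (hVstar s).le) fun s => ?_
    simp only [bellmanOp_add_const hP1, Pi.add_apply]
    linarith [bellmanOp_le_bellmanOp_one_sub (r := r) hP0 hP1 hγ1.le hm s, hT_one s]
  have lower : vstar + (fun _ => c - M) ≤ Vstar := by
    refine comparison (fun s => ?_) fun s => (hVstar s).ge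
    simp only [bellmanOp_add_const hP1, Pi.add_apply]
    linarith [bellmanOp_one_sub_le_bellmanOp (r := r) hP0 hP1 hγ1.le hM s, hT_one s]
  intro s
  have hup : Vstar s ≤ vstar s + (c - m) := upper s
  have hlow : vstar s + (c - M) ≤ Vstar s := lower s
  rw [hJ, ← mul_sub, abs_mul, abs_of_pos (sub_pos.2 hγ1)]
  exact mul_le_mul_of_nonneg_left (abs_sub_le_iff.2 ⟨by linarith [hM s], by linarith [hm s]⟩)
    (sub_pos.2 hγ1).le

/-- Discounted approximation of the average-reward setting (Lemma 2(ii) in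
Wei et al. 2020): if `(J*, v*)` solves the average-reward Bellman optimality
equation and `V*` is the optimal `γ`-discounted value function (the unique fixed
point of the discounted Bellman optimality operator), then
`|(1−γ)V*(s) − J*| ≤ (1−γ)·sp(v*)` for all states `s`. -/
theorem discounted_approximates_average_reward
    {S A : Type*} [Fintype S] [Fintype A] [Nonempty S] [Nonempty A]
    (P : S → A → S → ℝ)
    (hP : ∀ s a, (∀ s', 0 ≤ P s a s') ∧ ∑ s', P s a s' = 1)
    (r : S → A → ℝ) (hr : ∀ s a, r s a ∈ Set.Icc (0 : ℝ) 1)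
    (γ : ℝ) (hγ : γ ∈ Set.Ico (0 : ℝ) 1)
    (Jstar : ℝ) (vstar : S → ℝ)
    (hBell : ∀ s, Jstar + vstar s =
      Finset.univ.sup' Finset.univ_nonempty
        (fun a => r s a + ∑ s', P s a s' * vstar s'))
    (Vstar : S → ℝ)
    (hVstar : ∀ s, Vstar s =
      Finset.univ.sup' Finset.univ_nonempty
        (fun a => r s a + γ * ∑ s', P s a s' * Vstar s')) :
    ∀ s, |(1 - γ) * Vstar s - Jstar|
      ≤ (1 - γ) * (Finset.univ.sup' Finset.univ_nonempty vstar
          - Finset.univ.inf' Finset.univ_nonempty vstar) :=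
  discounted_approximates_average_reward_general P hP r γ hγ Jstar vstar hBell Vstar hVstar
end

section
/- Consider a finite MDP (S, A, P, r) with r ∈ [0,1] and discount factor γ ∈ [0,1). Suppose there exist J* ∈ ℝ and v* : S → ℝ satisfying J* + v*(s) = max_a (r(s,a) + ∑_{s'} P(s'|s,a) v*(s')) for all s. Let V* be the optimal γ-discounted value function. Then sp(V*) ≤ 2·sp(v*). -/
/-- Span bound for the discounted optimal value function (Lemma 2(i) in
Wei et al. 2020): under the average-reward Bellman optimality equation
assumption, `sp(V*) ≤ 2·sp(v*)`, where `V*` is the optimal `γ`-discounted value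
function (unique fixed point of the discounted Bellman optimality operator). -/
theorem span_discounted_value_le
    {S A : Type*} [Fintype S] [Fintype A] [Nonempty S] [Nonempty A]
    (P : S → A → S → ℝ)
    (hP : ∀ s a, (∀ s', 0 ≤ P s a s') ∧ ∑ s', P s a s' = 1)
    (r : S → A → ℝ) (hr : ∀ s a, r s a ∈ Set.Icc (0 : ℝ) 1)
    (γ : ℝ) (hγ : γ ∈ Set.Ico (0 : ℝ) 1)
    (Jstar : ℝ) (vstar : S → ℝ)
    (hBell : ∀ s, Jstar + vstar s =
      Finset.univ.sup' Finset.univ_nonempty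
        (fun a => r s a + ∑ s', P s a s' * vstar s'))
    (Vstar : S → ℝ)
    (hVstar : ∀ s, Vstar s =
      Finset.univ.sup' Finset.univ_nonempty
        (fun a => r s a + γ * ∑ s', P s a s' * Vstar s')) :
    Finset.univ.sup' Finset.univ_nonempty Vstar
        - Finset.univ.inf' Finset.univ_nonempty Vstar
      ≤ 2 * (Finset.univ.sup' Finset.univ_nonempty vstar
          - Finset.univ.inf' Finset.univ_nonempty vstar) := by
  obtain ⟨hγ0, hγ1⟩ := hγ
  have h1γ : (0:ℝ) < 1 - γ := by linarith
  set JJ : ℝ := Jstar / (1 - γ) with hJJdef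
  have hJJ : Jstar = (1 - γ) * JJ := by rw [hJJdef]; field_simp [h1γ.ne']
  set f : S → ℝ := fun s => vstar s + JJ with hf
  set M := Finset.univ.sup' Finset.univ_nonempty (fun s => Vstar s - f s) with hM
  set m := Finset.univ.inf' Finset.univ_nonempty (fun s => Vstar s - f s) with hm
  set vmax := Finset.univ.sup' Finset.univ_nonempty vstar with hvmax
  set vmin := Finset.univ.inf' Finset.univ_nonempty vstar with hvmin
  -- stochastic sum bounds
  have hsum_le : ∀ s a (g : S → ℝ) (c : ℝ), (∀ s', g s' ≤ c) →
      ∑ s', P s a s' * g s' ≤ c := by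
    intro s a g c hg
    calc ∑ s', P s a s' * g s' ≤ ∑ s', P s a s' * c := by
          apply Finset.sum_le_sum
          intro i _
          exact mul_le_mul_of_nonneg_left (hg i) ((hP s a).1 i)
      _ = c := by rw [← Finset.sum_mul, (hP s a).2, one_mul]
  have hsum_ge : ∀ s a (g : S → ℝ) (c : ℝ), (∀ s', c ≤ g s') →
      c ≤ ∑ s', P s a s' * g s' := by
    intro s a g c hg
    calc c = ∑ s', P s a s' * c := by rw [← Finset.sum_mul, (hP s a).2, one_mul]
      _ ≤ ∑ s', P s a s' * g s' := by
          apply Finset.sum_le_sum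
          intro i _
          exact mul_le_mul_of_nonneg_left (hg i) ((hP s a).1 i)
  have hsub : ∀ s a (g h : S → ℝ),
      ∑ s', P s a s' * g s' - ∑ s', P s a s' * h s'
        = ∑ s', P s a s' * (g s' - h s') := by
    intro s a g h
    rw [← Finset.sum_sub_distrib]
    exact Finset.sum_congr rfl (fun i _ => by ring)
  -- Step 1 : M ≤ -vmin
  have hMle : M ≤ -vmin := by
    obtain ⟨s₀, -, hs₀⟩ := Finset.exists_mem_eq_sup' Finset.univ_nonempty
      (fun s => Vstar s - f s)
    have key : Vstar s₀ ≤ f s₀ - (1 - γ) * vmin + γ * M := by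
      rw [hVstar s₀]
      apply Finset.sup'_le
      intro a _
      have h1 : ∑ s', P s₀ a s' * Vstar s' - ∑ s', P s₀ a s' * vstar s' ≤ JJ + M := by
        rw [hsub]
        apply hsum_le
        intro s'
        have := Finset.le_sup' (fun s => Vstar s - f s) (Finset.mem_univ s')
        rw [← hM] at this
        simp only [hf] at this
        linarith
      have h2 : r s₀ a + ∑ s', P s₀ a s' * vstar s' ≤ Jstar + vstar s₀ := by
        rw [hBell s₀]
        exact Finset.le_sup' (fun a => r s₀ a + ∑ s', P s₀ a s' * vstar s')
          (Finset.mem_univ a)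
      have h3 : vmin ≤ ∑ s', P s₀ a s' * vstar s' := by
        apply hsum_ge
        intro s'
        exact Finset.inf'_le vstar (Finset.mem_univ s')
      have h4 : (1 - γ) * vmin ≤ (1 - γ) * (∑ s', P s₀ a s' * vstar s') :=
        mul_le_mul_of_nonneg_left h3 (le_of_lt h1γ)
      have h5 : γ * (∑ s', P s₀ a s' * Vstar s')
          ≤ γ * (∑ s', P s₀ a s' * vstar s' + JJ + M) :=
        mul_le_mul_of_nonneg_left (by linarith) hγ0
      simp only [hf]
      nlinarith [h4, h5, h2, hJJ]
    have hMeq : M = Vstar s₀ - f s₀ := hM.trans hs₀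
    have : M ≤ -(1 - γ) * vmin + γ * M := by linarith
    nlinarith
  -- Step 2 : -vmax ≤ m
  have hmge : -vmax ≤ m := by
    obtain ⟨s₁, -, hs₁⟩ := Finset.exists_mem_eq_inf' Finset.univ_nonempty
      (fun s => Vstar s - f s)
    obtain ⟨a, -, ha⟩ := Finset.exists_mem_eq_sup' (Finset.univ_nonempty (α := A))
      (fun a => r s₁ a + ∑ s', P s₁ a s' * vstar s')
    have hBa : Jstar + vstar s₁ = r s₁ a + ∑ s', P s₁ a s' * vstar s' := by
      rw [hBell s₁, ha]
    have key : f s₁ - (1 - γ) * vmax + γ * m ≤ Vstar s₁ := by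
      have h0 : r s₁ a + γ * ∑ s', P s₁ a s' * Vstar s' ≤ Vstar s₁ := by
        rw [hVstar s₁]
        exact Finset.le_sup' (fun a => r s₁ a + γ * ∑ s', P s₁ a s' * Vstar s')
          (Finset.mem_univ a)
      have h1 : JJ + m ≤ ∑ s', P s₁ a s' * Vstar s' - ∑ s', P s₁ a s' * vstar s' := by
        rw [hsub]
        apply hsum_ge
        intro s'
        have := Finset.inf'_le (fun s => Vstar s - f s) (Finset.mem_univ s')
        rw [← hm] at this
        simp only [hf] at this
        linarith
      have h3 : ∑ s', P s₁ a s' * vstar s' ≤ vmax := by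
        apply hsum_le
        intro s'
        exact Finset.le_sup' vstar (Finset.mem_univ s')
      have h4 : (1 - γ) * (∑ s', P s₁ a s' * vstar s') ≤ (1 - γ) * vmax :=
        mul_le_mul_of_nonneg_left h3 (le_of_lt h1γ)
      have h5 : γ * (∑ s', P s₁ a s' * vstar s' + JJ + m)
          ≤ γ * (∑ s', P s₁ a s' * Vstar s') :=
        mul_le_mul_of_nonneg_left (by linarith) hγ0
      simp only [hf]
      nlinarith [h4, h5, hBa, hJJ]
    have hmeq : m = Vstar s₁ - f s₁ := hm.trans hs₁
    have : -(1 - γ) * vmax + γ * m ≤ m := by linarith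
    nlinarith
  -- Conclusion
  obtain ⟨smax, -, hsmax⟩ := Finset.exists_mem_eq_sup' (Finset.univ_nonempty (α := S)) Vstar
  obtain ⟨smin, -, hsmin⟩ := Finset.exists_mem_eq_inf' (Finset.univ_nonempty (α := S)) Vstar
  rw [hsmax, hsmin]
  have hMmax : Vstar smax - f smax ≤ M :=
    Finset.le_sup' (fun s => Vstar s - f s) (Finset.mem_univ smax)
  have hmmin : m ≤ Vstar smin - f smin :=
    Finset.inf'_le (fun s => Vstar s - f s) (Finset.mem_univ smin)
  have hvs1 : vstar smax ≤ vmax := Finset.le_sup' vstar (Finset.mem_univ smax)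
  have hvs2 : vmin ≤ vstar smin := Finset.inf'_le vstar (Finset.mem_univ smin)
  simp only [hf] at hMmax hmmin
  linarith
end
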